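/- Suppose f is worst-case monotone and worst-case submodular and f(∅) = 0, let B be a positive integer budget, and let π^{g+} be the relaxed budgeted worst-case density-greedy policy. Then for every adaptive policy π* with c_wc(π*) ≤ B, f_wc(π^{g+}) ≥ (1 − 1/e) · f_wc(π*). -/

import Mathlib

namespace WCAS

variable {ι O : Type*}

/-- The domain of a partial realization `ψ : ι → Option O`. -/
def dom (ψ : ι → Option O) : Set ι := {e | ψ e ≠ none}

/-- A (full) realization `φ` is consistent with a partial realization `ψ`. -/
def consistent (φ : ι → O) (ψ : ι → Option O) : Prop :=
  ∀ e o, ψ e = some o → φ e = o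

/-- `ψ` is a subrealization of `ψ'` (written `ψ ⊆ ψ'`). -/
def subreal (ψ ψ' : ι → Option O) : Prop :=
  ∀ e o, ψ e = some o → ψ' e = some o

/-- Extend a partial realization `ψ` by observing state `o` for item `e`. -/
def extendPR [DecidableEq ι] (ψ : ι → Option O) (e : ι) (o : O) : ι → Option O :=
  fun x => if x = e then some o else ψ x

/-- The empty partial realization. -/
def emptyPR : ι → Option O := fun _ => none

/-- View a full realization as a partial realization with full domain. -/
def toPR (φ : ι → O) : ι → Option O := fun e => some (φ e)

/-- `O(e, ψ)`: the set of possible states of item `e` given observation `ψ`,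
with respect to the set `U` of possible realizations. -/
def Ostates (U : Set (ι → O)) (e : ι) (ψ : ι → Option O) : Set O :=
  {o | ∃ φ ∈ U, consistent φ ψ ∧ φ e = o}

/-- The worst-case marginal utility `Δwc(e | ψ)` of item `e` on top of `ψ`. -/
noncomputable def Dwc [DecidableEq ι] (f : (ι → Option O) → ℝ) (U : Set (ι → O))
    (e : ι) (ψ : ι → Option O) : ℝ :=
  sInf ((fun o => f (extendPR ψ e o) - f ψ) '' Ostates U e ψ)

/-- `f` is worst-case monotone. -/
def WCMonotone [DecidableEq ι] (f : (ι → Option O) → ℝ) (U : Set (ι → O)) : Prop :=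
  ∀ ψ : ι → Option O, (∃ φ ∈ U, consistent φ ψ) →
    ∀ e, e ∉ dom ψ → 0 ≤ Dwc f U e ψ

/-- `f` is worst-case submodular. -/
def WCSubmodular [DecidableEq ι] (f : (ι → Option O) → ℝ) (U : Set (ι → O)) : Prop :=
  ∀ ψ ψ' : ι → Option O, subreal ψ ψ' → (∃ φ ∈ U, consistent φ ψ') →
    ∀ e, e ∉ dom ψ' → Dwc f U e ψ' ≤ Dwc f U e ψ

/-- An adaptive policy maps each observation either to an item outside its
domain or to `none` (stop). -/
def ValidPolicy (π : (ι → Option O) → Option ι) : Prop :=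
  ∀ ψ e, π ψ = some e → ψ e = none

/-- One step of executing policy `π` under realization `φ`. -/
def stepPolicy [DecidableEq ι] (π : (ι → Option O) → Option ι) (φ : ι → O)
    (ψ : ι → Option O) : ι → Option O :=
  match π ψ with
  | none => ψ
  | some e => extendPR ψ e (φ e)

/-- Executing policy `π` under realization `φ` for `n` steps, starting from the
empty observation. -/
def runPolicy [DecidableEq ι] (π : (ι → Option O) → Option ι) (φ : ι → O) :
    ℕ → ι → Option O
  | 0 => emptyPR
  | n + 1 => stepPolicy π φ (runPolicy π φ n)

/-- The final partial realization `ψ(π, φ)` produced by executing `π` under `φ`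
(a valid policy over a finite ground set terminates within `card ι` steps). -/
def finalPR [DecidableEq ι] [Fintype ι] (π : (ι → Option O) → Option ι) (φ : ι → O) :
    ι → Option O :=
  runPolicy π φ (Fintype.card ι)

open scoped Classical in
/-- The total cost `c(dom ψ)` of the items in the domain of `ψ`. -/
noncomputable def costPR [Fintype ι] (c : ι → ℝ) (ψ : ι → Option O) : ℝ :=
  ∑ e : ι, if (ψ e).isSome then c e else 0

/-- The worst-case cost `c_wc(π) = max_{φ ∈ U} c(dom ψ(π, φ))`. -/
noncomputable def cwc [DecidableEq ι] [Fintype ι] (c : ι → ℝ) (U : Set (ι → O))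
    (π : (ι → Option O) → Option ι) : ℝ :=
  sSup ((fun φ => costPR c (finalPR π φ)) '' U)

/-- The worst-case utility `f_wc(π) = min_{φ ∈ U} f(ψ(π, φ))`. -/
noncomputable def fwc [DecidableEq ι] [Fintype ι] (f : (ι → Option O) → ℝ)
    (U : Set (ι → O)) (π : (ι → Option O) → Option ι) : ℝ :=
  sInf ((fun φ => f (finalPR π φ)) '' U)

/-- `ψ` is reachable by executing `π` under some realization in `U`. -/
def Reachable [DecidableEq ι] (π : (ι → Option O) → Option ι) (U : Set (ι → O))
    (ψ : ι → Option O) : Prop :=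
  ∃ φ ∈ U, ∃ n, runPolicy π φ n = ψ

/-- Policy `π` covers the goal value `Q`: under every realization in `U`,
its final observation has utility at least `Q`. -/
def Covers [DecidableEq ι] [Fintype ι] (f : (ι → Option O) → ℝ) (U : Set (ι → O))
    (π : (ι → Option O) → Option ι) (Q : ℝ) : Prop :=
  ∀ φ ∈ U, Q ≤ f (finalPR π φ)

/-- The worst-case density-greedy policy for the cover problem with goal `Q`:
it stops at observations with `f ψ ≥ Q`, and at any reachable observation with
`f ψ < Q` it selects an item maximizing `Δwc(e | ψ) / c(e)`. -/
def CoverGreedy [DecidableEq ι] [Fintype ι] (f : (ι → Option O) → ℝ)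
    (U : Set (ι → O)) (c : ι → ℝ) (Q : ℝ) (π : (ι → Option O) → Option ι) : Prop :=
  ValidPolicy π ∧
  (∀ ψ : ι → Option O, Q ≤ f ψ → π ψ = none) ∧
  (∀ ψ : ι → Option O, Reachable π U ψ → f ψ < Q →
    ∃ e, e ∉ dom ψ ∧ π ψ = some e ∧
      ∀ e', e' ∉ dom ψ → Dwc f U e' ψ / c e' ≤ Dwc f U e ψ / c e)

/-- The budgeted worst-case density-greedy policy: at any reachable observation
it picks a density-maximizing item and selects it if the budget permits,
stopping otherwise. -/
def BudgetGreedy [DecidableEq ι] [Fintype ι] (f : (ι → Option O) → ℝ)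
    (U : Set (ι → O)) (c : ι → ℝ) (B : ℝ) (π : (ι → Option O) → Option ι) : Prop :=
  ValidPolicy π ∧
  ∀ ψ : ι → Option O, Reachable π U ψ → dom ψ ≠ Set.univ →
    ∃ e, e ∉ dom ψ ∧
      (∀ e', e' ∉ dom ψ → Dwc f U e' ψ / c e' ≤ Dwc f U e ψ / c e) ∧
      ((costPR c ψ + c e ≤ B ∧ π ψ = some e) ∨ (B < costPR c ψ + c e ∧ π ψ = none))

/-- The relaxed budgeted worst-case density-greedy policy: it keeps selecting
density-maximizing items while the cost spent so far is within the budget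
(thus also selecting the first item that makes the total cost exceed the
budget), and stops once the budget has been exceeded. -/
def RelaxedBudgetGreedy [DecidableEq ι] [Fintype ι] (f : (ι → Option O) → ℝ)
    (U : Set (ι → O)) (c : ι → ℝ) (B : ℝ) (π : (ι → Option O) → Option ι) : Prop :=
  ValidPolicy π ∧
  (∀ ψ : ι → Option O, Reachable π U ψ → B < costPR c ψ → π ψ = none) ∧
  (∀ ψ : ι → Option O, Reachable π U ψ → costPR c ψ ≤ B → dom ψ ≠ Set.univ →
    ∃ e, e ∉ dom ψ ∧ π ψ = some e ∧
      ∀ e', e' ∉ dom ψ → Dwc f U e' ψ / c e' ≤ Dwc f U e ψ / c e)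

/-!
Let `ψ` be an observation reached by the greedy policy, `e` its next item and
`ρ = Δwc(e | ψ) / c(e)`. Run `π*` against an adversary that answers according to `ψ` where `ψ` is
defined and otherwise commits each item `π*` selects to a worst-case state. By worst-case
submodularity and the greedy choice of `e`, every item `e'` that `π*` selects raises the
adversary's committed utility by at most `ρ · c(e')`, and by worst-case monotonicity that utility
bounds what `π*` observes. As `π*` spends at most `B`, this gives `f* ≤ f(ψ) + ρ B`, where
`f* = f_wc(π*)`. So each greedy step of cost `c(e)` shrinks the gap `f* - f(ψ)` by the factor
`1 - c(e)/B ≤ exp (-c(e)/B)`, and once the greedy policy has spent more than `B` the gap is at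
most `f* / e`.
-/

lemma notMem_dom {ψ : ι → Option O} {e : ι} : e ∉ dom ψ ↔ ψ e = none := by
  simp [dom]

lemma subreal_refl (ψ : ι → Option O) : subreal ψ ψ := fun _ _ h => h

lemma subreal.trans {ψ₁ ψ₂ ψ₃ : ι → Option O} (h₁ : subreal ψ₁ ψ₂) (h₂ : subreal ψ₂ ψ₃) :
    subreal ψ₁ ψ₃ := fun e o h => h₂ e o (h₁ e o h)

lemma subreal.eq_none {ψ μ : ι → Option O} (h : subreal ψ μ) {e : ι} (he : μ e = none) :
    ψ e = none := by
  cases hψe : ψ e with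
  | none => rfl
  | some o => simpa [he] using h e o hψe

lemma consistent.mono {φ : ι → O} {ψ ψ' : ι → Option O} (h : consistent φ ψ')
    (hψ : subreal ψ ψ') : consistent φ ψ := fun e o he => h e o (hψ e o he)

lemma consistent_emptyPR (φ : ι → O) : consistent φ emptyPR := by
  intro e o h
  simp [emptyPR] at h

lemma costPR_emptyPR [Fintype ι] (c : ι → ℝ) : costPR c (emptyPR : ι → Option O) = 0 := by
  simp [costPR, emptyPR]

section Extension

variable [DecidableEq ι]

lemma dom_extendPR (ψ : ι → Option O) (e : ι) (o : O) :
    dom (extendPR ψ e o) = insert e (dom ψ) := by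
  ext x
  by_cases hx : x = e <;> simp [dom, extendPR, hx]

lemma subreal_extendPR {ψ : ι → Option O} {e : ι} (he : ψ e = none) (o : O) :
    subreal ψ (extendPR ψ e o) := by
  intro x o' hx
  have : x ≠ e := by rintro rfl; simp [he] at hx
  simp [extendPR, this, hx]

lemma extendPR_subreal {ψ μ : ι → Option O} {e : ι} {o : O} (h : subreal ψ μ)
    (he : μ e = some o) : subreal (extendPR ψ e o) μ := by
  intro x o' hx
  by_cases hxe : x = e
  · subst hxe
    simp only [extendPR, if_pos, Option.some.injEq] at hx
    rwa [← hx]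
  · simp only [extendPR, hxe, if_false] at hx
    exact h x o' hx

lemma consistent_extendPR {φ : ι → O} {ψ : ι → Option O} (h : consistent φ ψ) (e : ι) :
    consistent φ (extendPR ψ e (φ e)) := by
  intro x o hx
  by_cases hxe : x = e
  · subst hxe
    simpa [extendPR] using hx
  · simp only [extendPR, hxe, if_false] at hx
    exact h x o hx

lemma costPR_extendPR [Fintype ι] (c : ι → ℝ) {ψ : ι → Option O} {e : ι} (he : ψ e = none)
    (o : O) : costPR c (extendPR ψ e o) = costPR c ψ + c e := by
  classical
  have hsplit : ∀ x, (if (extendPR ψ e o x).isSome then c x else 0) =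
      (if (ψ x).isSome then c x else 0) + if x = e then c x else 0 := by
    intro x
    by_cases hxe : x = e
    · subst hxe; simp [extendPR, he]
    · simp [extendPR, hxe]
  simp only [costPR, hsplit, Finset.sum_add_distrib, Finset.sum_ite_eq', Finset.mem_univ,
    if_true]

end Extension

section Marginals

variable [DecidableEq ι] [Finite O] {f : (ι → Option O) → ℝ} {U : Set (ι → O)}

lemma dwc_le_sub {φ : ι → O} (hφ : φ ∈ U) {ψ : ι → Option O} (hφψ : consistent φ ψ) (e : ι) :
    Dwc f U e ψ ≤ f (extendPR ψ e (φ e)) - f ψ :=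
  csInf_le ((Set.toFinite _).image _).bddBelow ⟨φ e, ⟨φ, hφ, hφψ, rfl⟩, rfl⟩

lemma exists_sub_le_dwc {ψ : ι → Option O} (hψ : ∃ φ ∈ U, consistent φ ψ) (e : ι) :
    ∃ o ∈ Ostates U e ψ, f (extendPR ψ e o) - f ψ ≤ Dwc f U e ψ := by
  obtain ⟨φ, hφ, hφψ⟩ := hψ
  have hne : (Ostates U e ψ).Nonempty := ⟨φ e, φ, hφ, hφψ, rfl⟩
  obtain ⟨o, ho, heq⟩ := (hne.image fun o => f (extendPR ψ e o) - f ψ).csInf_mem (Set.toFinite _)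
  exact ⟨o, ho, heq.le⟩

lemma WCMonotone.le_extendPR (hmono : WCMonotone f U) {φ : ι → O} (hφ : φ ∈ U)
    {ψ : ι → Option O} (hφψ : consistent φ ψ) {e : ι} (he : ψ e = none) :
    f ψ ≤ f (extendPR ψ e (φ e)) := by
  have := hmono ψ ⟨φ, hφ, hφψ⟩ e (notMem_dom.mpr he)
  linarith [dwc_le_sub (f := f) hφ hφψ e]

lemma WCMonotone.le_of_subreal [Fintype ι] (hmono : WCMonotone f U) {χ μ : ι → Option O}
    (hχμ : subreal χ μ) (hμ : ∃ φ ∈ U, consistent φ μ) : f χ ≤ f μ := by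
  obtain ⟨φ, hφ, hφμ⟩ := hμ
  suffices ∀ s : Finset ι, ∀ χ, subreal χ μ → (∀ x ∉ s, χ x = μ x) → f χ ≤ f μ from
    this Finset.univ χ hχμ (by simp)
  intro s
  induction s using Finset.induction_on with
  | empty =>
    intro χ _ hχ
    rw [show χ = μ from funext fun x => hχ x (Finset.notMem_empty x)]
  | insert a s _ ih =>
    intro χ hχμ hχ
    by_cases hχa : χ a = μ a
    · refine ih χ hχμ fun x hx => ?_
      by_cases hxa : x = a
      · rwa [hxa]
      · exact hχ x (by simp [hxa, hx])
    have hχa' : χ a = none := by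
      cases h : χ a with
      | none => rfl
      | some o => exact absurd (h.trans (hχμ a o h).symm) hχa
    obtain ⟨o, hμa⟩ := Option.ne_none_iff_exists'.mp fun h => hχa (hχa'.trans h.symm)
    have hμa' : μ a = some (φ a) := by rw [hφμ a o hμa, hμa]
    calc f χ ≤ f (extendPR χ a (φ a)) := hmono.le_extendPR hφ (hφμ.mono hχμ) hχa'
      _ ≤ f μ := by
        refine ih _ (extendPR_subreal hχμ hμa') fun x hx => ?_
        by_cases hxa : x = a
        · subst hxa; simp [extendPR, hμa']
        · simpa [extendPR, hxa] using hχ x (by simp [hxa, hx])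

end Marginals

section Runs

variable [DecidableEq ι] {π : (ι → Option O) → Option ι} {φ : ι → O}

lemma stepPolicy_of_eq_none {ψ : ι → Option O} (h : π ψ = none) : stepPolicy π φ ψ = ψ := by
  simp [stepPolicy, h]

lemma stepPolicy_of_eq_some {ψ : ι → Option O} {e : ι} (h : π ψ = some e) :
    stepPolicy π φ ψ = extendPR ψ e (φ e) := by
  simp [stepPolicy, h]

lemma consistent_runPolicy (n : ℕ) : consistent φ (runPolicy π φ n) := by
  induction n with
  | zero => exact consistent_emptyPR φ
  | succ n ih =>
    cases h : π (runPolicy π φ n) with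
    | none => rwa [runPolicy, stepPolicy_of_eq_none h]
    | some e => rw [runPolicy, stepPolicy_of_eq_some h]; exact consistent_extendPR ih e

lemma runPolicy_add_of_eq_none {n : ℕ} (h : π (runPolicy π φ n) = none) (k : ℕ) :
    runPolicy π φ (n + k) = runPolicy π φ n := by
  induction k with
  | zero => rfl
  | succ k ih => rw [← add_assoc, runPolicy, ih, stepPolicy_of_eq_none h]

lemma le_ncard_dom_runPolicy [Finite ι] (hπ : ValidPolicy π) {n : ℕ}
    (h : ∀ m < n, π (runPolicy π φ m) ≠ none) : n ≤ (dom (runPolicy π φ n)).ncard := by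
  induction n with
  | zero => exact Nat.zero_le _
  | succ n ih =>
    obtain ⟨e, he⟩ := Option.ne_none_iff_exists'.mp (h n n.lt_succ_self)
    rw [runPolicy, stepPolicy_of_eq_some he, dom_extendPR,
      Set.ncard_insert_of_notMem (notMem_dom.mpr (hπ _ _ he)) (Set.toFinite _)]
    exact Nat.succ_le_succ (ih fun m hm => h m (hm.trans n.lt_succ_self))

lemma runPolicy_card_eq_none [Fintype ι] (hπ : ValidPolicy π) (φ : ι → O) :
    π (runPolicy π φ (Fintype.card ι)) = none := by
  by_contra hne
  have hgo : ∀ m < Fintype.card ι + 1, π (runPolicy π φ m) ≠ none := by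
    intro m hm hm'
    apply hne
    rw [← Nat.add_sub_cancel' (Nat.le_of_lt_succ hm), runPolicy_add_of_eq_none hm']
    exact hm'
  have := (le_ncard_dom_runPolicy hπ hgo).trans (Set.ncard_le_card _)
  simp at this

end Runs

section Adversary

variable [DecidableEq ι]

/-- A state of `e` attaining `Δwc(e | μ)` (junk if `O(e, μ)` is empty). -/
noncomputable def worstState [Nonempty O] (f : (ι → Option O) → ℝ) (U : Set (ι → O))
    (μ : ι → Option O) (e : ι) : O :=
  Classical.epsilon fun o => o ∈ Ostates U e μ ∧ f (extendPR μ e o) - f μ ≤ Dwc f U e μ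

/-- One step of `π` played against an adversary: the first component is `π`'s observation, the
second the states the adversary has committed to. -/
noncomputable def adversaryStep [Nonempty O] (f : (ι → Option O) → ℝ) (U : Set (ι → O))
    (π : (ι → Option O) → Option ι) (p : (ι → Option O) × (ι → Option O)) :
    (ι → Option O) × (ι → Option O) :=
  match π p.1 with
  | none => p
  | some e =>
    match p.2 e with
    | some o => (extendPR p.1 e o, p.2)
    | none => (extendPR p.1 e (worstState f U p.2 e), extendPR p.2 e (worstState f U p.2 e))

noncomputable def adversaryRun [Nonempty O] (f : (ι → Option O) → ℝ) (U : Set (ι → O))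
    (π : (ι → Option O) → Option ι) (ψ : ι → Option O) : ℕ → (ι → Option O) × (ι → Option O)
  | 0 => (emptyPR, ψ)
  | n + 1 => adversaryStep f U π (adversaryRun f U π ψ n)

variable [Nonempty O] {f : (ι → Option O) → ℝ} {U : Set (ι → O)} {π : (ι → Option O) → Option ι}
  {p : (ι → Option O) × (ι → Option O)}

lemma worstState_spec [Finite O] {μ : ι → Option O} (hμ : ∃ φ ∈ U, consistent φ μ) (e : ι) :
    worstState f U μ e ∈ Ostates U e μ ∧
      f (extendPR μ e (worstState f U μ e)) - f μ ≤ Dwc f U e μ := by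
  obtain ⟨o, ho, hle⟩ := exists_sub_le_dwc (f := f) hμ e
  exact Classical.epsilon_spec (p := fun o => o ∈ Ostates U e μ ∧
    f (extendPR μ e o) - f μ ≤ Dwc f U e μ) ⟨o, ho, hle⟩

lemma adversaryStep_of_eq_none (h : π p.1 = none) : adversaryStep f U π p = p := by
  simp [adversaryStep, h]

lemma exists_adversaryStep_of_eq_some {e : ι} (h : π p.1 = some e) :
    ∃ o, (adversaryStep f U π p).1 = extendPR p.1 e o ∧ (adversaryStep f U π p).2 e = some o := by
  cases he : p.2 e with
  | some o => exact ⟨o, by simp [adversaryStep, h, he]⟩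
  | none =>
    exact ⟨worstState f U p.2 e, by simp [adversaryStep, h, he],
      by simp [adversaryStep, h, he, extendPR]⟩

lemma subreal_adversaryStep_snd : subreal p.2 (adversaryStep f U π p).2 := by
  unfold adversaryStep
  split
  · exact subreal_refl _
  · split
    · exact subreal_refl _
    · exact subreal_extendPR ‹_› _

lemma adversaryStep_fst_subreal_snd (h : subreal p.1 p.2) :
    subreal (adversaryStep f U π p).1 (adversaryStep f U π p).2 := by
  cases hπp : π p.1 with
  | none => rwa [adversaryStep_of_eq_none hπp]
  | some e =>
    obtain ⟨o, h₁, h₂⟩ := exists_adversaryStep_of_eq_some (f := f) (U := U) hπp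
    rw [h₁]
    exact extendPR_subreal (h.trans subreal_adversaryStep_snd) h₂

lemma adversaryStep_snd_consistent [Finite O] (hp : ∃ φ ∈ U, consistent φ p.2) :
    ∃ φ ∈ U, consistent φ (adversaryStep f U π p).2 := by
  unfold adversaryStep
  split
  · exact hp
  · split
    · exact hp
    · obtain ⟨φ, hφ, hφp, hφe⟩ := (worstState_spec (f := f) hp _).1
      exact ⟨φ, hφ, hφe ▸ consistent_extendPR hφp _⟩

lemma adversaryStep_snd_le [Fintype ι] [Finite O] (hsub : WCSubmodular f U)
    (hπ : ValidPolicy π) {c : ι → ℝ} (hc : ∀ e, 0 ≤ c e) {ψ : ι → Option O} {ρ : ℝ}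
    (hρ : 0 ≤ ρ) (hmarg : ∀ e ∉ dom ψ, Dwc f U e ψ ≤ ρ * c e) (hψp : subreal ψ p.2)
    (hp : ∃ φ ∈ U, consistent φ p.2) :
    f (adversaryStep f U π p).2 + ρ * costPR c p.1 ≤
      f p.2 + ρ * costPR c (adversaryStep f U π p).1 := by
  cases hπp : π p.1 with
  | none => rw [adversaryStep_of_eq_none hπp]
  | some e =>
    have hcost := costPR_extendPR c (hπ _ _ hπp)
    cases hpe : p.2 e with
    | some o =>
      simp only [adversaryStep, hπp, hpe, hcost]
      nlinarith [hc e]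
    | none =>
      have hworst := (worstState_spec (f := f) hp e).2
      have hsubmod := hsub ψ p.2 hψp hp e (notMem_dom.mpr hpe)
      have hgreedy := hmarg e (notMem_dom.mpr (hψp.eq_none hpe))
      simp only [adversaryStep, hπp, hpe, hcost]
      linarith

variable {ψ : ι → Option O}

lemma subreal_adversaryRun_snd (n : ℕ) : subreal ψ (adversaryRun f U π ψ n).2 := by
  induction n with
  | zero => exact subreal_refl ψ
  | succ n ih => exact ih.trans subreal_adversaryStep_snd

lemma adversaryRun_snd_consistent [Finite O] (hψ : ∃ φ ∈ U, consistent φ ψ) (n : ℕ) :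
    ∃ φ ∈ U, consistent φ (adversaryRun f U π ψ n).2 := by
  induction n with
  | zero => exact hψ
  | succ n ih => exact adversaryStep_snd_consistent ih

lemma adversaryRun_fst_subreal_snd (n : ℕ) :
    subreal (adversaryRun f U π ψ n).1 (adversaryRun f U π ψ n).2 := by
  induction n with
  | zero => intro e o h; simp [adversaryRun, emptyPR] at h
  | succ n ih => exact adversaryStep_fst_subreal_snd ih

lemma runPolicy_eq_adversaryRun_fst {φ : ι → O} {n : ℕ}
    (hφ : consistent φ (adversaryRun f U π ψ n).2) :
    runPolicy π φ n = (adversaryRun f U π ψ n).1 := by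
  induction n with
  | zero => rfl
  | succ n ih =>
    rw [runPolicy, ih (hφ.mono subreal_adversaryStep_snd), adversaryRun]
    cases hπp : π (adversaryRun f U π ψ n).1 with
    | none => rw [stepPolicy_of_eq_none hπp, adversaryStep_of_eq_none hπp]
    | some e =>
      obtain ⟨o, h₁, h₂⟩ := exists_adversaryStep_of_eq_some (f := f) (U := U) hπp
      rw [adversaryRun] at hφ
      rw [stepPolicy_of_eq_some hπp, h₁, hφ e o h₂]

lemma f_adversaryRun_snd_le [Fintype ι] [Finite O] (hsub : WCSubmodular f U)
    (hπ : ValidPolicy π) {c : ι → ℝ} (hc : ∀ e, 0 ≤ c e) {ρ : ℝ} (hρ : 0 ≤ ρ)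
    (hmarg : ∀ e ∉ dom ψ, Dwc f U e ψ ≤ ρ * c e) (hψ : ∃ φ ∈ U, consistent φ ψ) (n : ℕ) :
    f (adversaryRun f U π ψ n).2 ≤ f ψ + ρ * costPR c (adversaryRun f U π ψ n).1 := by
  induction n with
  | zero => simp [adversaryRun, costPR_emptyPR]
  | succ n ih =>
    have := adversaryStep_snd_le hsub hπ hc hρ hmarg (subreal_adversaryRun_snd (f := f) n)
      (adversaryRun_snd_consistent (π := π) hψ n)
    rw [adversaryRun]
    linarith

theorem exists_finalPR_le_add_mul_costPR [Fintype ι] [Finite O] (hmono : WCMonotone f U)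
    (hsub : WCSubmodular f U) (hπ : ValidPolicy π) {c : ι → ℝ} (hc : ∀ e, 0 ≤ c e)
    (hψ : ∃ φ ∈ U, consistent φ ψ) {ρ : ℝ} (hρ : 0 ≤ ρ)
    (hmarg : ∀ e ∉ dom ψ, Dwc f U e ψ ≤ ρ * c e) :
    ∃ φ ∈ U, f (finalPR π φ) ≤ f ψ + ρ * costPR c (finalPR π φ) := by
  set A := adversaryRun f U π ψ (Fintype.card ι)
  obtain ⟨φ, hφ, hφA⟩ := adversaryRun_snd_consistent (π := π) hψ (Fintype.card ι)
  refine ⟨φ, hφ, ?_⟩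
  rw [finalPR, runPolicy_eq_adversaryRun_fst hφA]
  calc f A.1 ≤ f A.2 := hmono.le_of_subreal (adversaryRun_fst_subreal_snd _) ⟨φ, hφ, hφA⟩
    _ ≤ f ψ + ρ * costPR c A.1 := f_adversaryRun_snd_le hsub hπ hc hρ hmarg hψ _

end Adversary

lemma le_mul_exp_neg_of_le_sub_mul {g g' x D : ℝ} (hD : 0 ≤ D) (hgD : g ≤ D) (hg' : g' ≤ g)
    (hdecay : g' ≤ g - x * g) : g' ≤ D * Real.exp (-x) := by
  have hexp := Real.exp_pos (-x)
  rcases le_or_gt g 0 with hg | hg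
  · nlinarith
  · nlinarith [Real.add_one_le_exp (-x)]

section Greedy

variable [DecidableEq ι] [Fintype ι] [Finite O] [Nonempty O] {f : (ι → Option O) → ℝ}
  {U : Set (ι → O)} {c : ι → ℝ} {πs : (ι → Option O) → Option ι} {F B : ℝ}

lemma mul_sub_le_mul_dwc (hmono : WCMonotone f U) (hsub : WCSubmodular f U)
    (hc : ∀ e, 0 < c e) (hπs : ValidPolicy πs) (hF : ∀ φ ∈ U, F ≤ f (finalPR πs φ))
    (hcost : ∀ φ ∈ U, costPR c (finalPR πs φ) ≤ B) {ψ : ι → Option O}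
    (hψ : ∃ φ ∈ U, consistent φ ψ) {e : ι} (he : e ∉ dom ψ)
    (hmax : ∀ e' ∉ dom ψ, Dwc f U e' ψ / c e' ≤ Dwc f U e ψ / c e) :
    c e * (F - f ψ) ≤ B * Dwc f U e ψ := by
  set ρ := Dwc f U e ψ / c e
  have hρ : 0 ≤ ρ := div_nonneg (hmono ψ hψ e he) (hc e).le
  obtain ⟨φ, hφ, hle⟩ := exists_finalPR_le_add_mul_costPR hmono hsub hπs (fun e => (hc e).le)
    hψ hρ fun e' he' => (div_le_iff₀ (hc e')).mp (hmax e' he')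
  have hgap : F - f ψ ≤ ρ * B := by
    nlinarith [hF φ hφ, mul_le_mul_of_nonneg_left (hcost φ hφ) hρ]
  calc c e * (F - f ψ) ≤ c e * (ρ * B) := mul_le_mul_of_nonneg_left hgap (hc e).le
    _ = B * Dwc f U e ψ := by simp only [ρ]; field_simp [(hc e).ne']

variable {πg : (ι → Option O) → Option ι}

lemma RelaxedBudgetGreedy.sub_le_mul_exp_runPolicy (hgp : RelaxedBudgetGreedy f U c B πg)
    (hmono : WCMonotone f U) (hsub : WCSubmodular f U) (hempty : f emptyPR = 0)
    (hc : ∀ e, 0 < c e) (hB : 0 < B) (hπs : ValidPolicy πs)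
    (hF : ∀ φ ∈ U, F ≤ f (finalPR πs φ)) (hF0 : 0 ≤ F)
    (hcost : ∀ φ ∈ U, costPR c (finalPR πs φ) ≤ B) {φ : ι → O} (hφ : φ ∈ U) (n : ℕ) :
    F - f (runPolicy πg φ n) ≤ F * Real.exp (-costPR c (runPolicy πg φ n) / B) := by
  induction n with
  | zero => simp [runPolicy, hempty, costPR_emptyPR]
  | succ n ih =>
    set ψ := runPolicy πg φ n
    have hreach : Reachable πg U ψ := ⟨φ, hφ, n, rfl⟩
    have hψ : ∃ φ ∈ U, consistent φ ψ := ⟨φ, hφ, consistent_runPolicy n⟩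
    cases hstep : πg ψ with
    | none => rwa [runPolicy, stepPolicy_of_eq_none hstep]
    | some e =>
      have he : ψ e = none := hgp.1 _ _ hstep
      have hcostB : costPR c ψ ≤ B := not_lt.mp fun h => by simp [hgp.2.1 ψ hreach h] at hstep
      have hdom : dom ψ ≠ Set.univ := fun h => notMem_dom.mpr he (h ▸ Set.mem_univ e)
      obtain ⟨e', he', hsome, hmax⟩ := hgp.2.2 ψ hreach hcostB hdom
      obtain rfl : e' = e := Option.some_injective _ (hsome.symm.trans hstep)
      have hgain := mul_sub_le_mul_dwc hmono hsub hc hπs hF hcost hψ he' hmax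
      have hmarg := dwc_le_sub (f := f) hφ (consistent_runPolicy (π := πg) n) e'
      have hmarg0 := hmono ψ hψ e' he'
      rw [runPolicy, stepPolicy_of_eq_some hstep, costPR_extendPR c he]
      have hexp : F * Real.exp (-(costPR c ψ + c e') / B) =
          F * Real.exp (-costPR c ψ / B) * Real.exp (-(c e' / B)) := by
        rw [mul_assoc, ← Real.exp_add]; ring_nf
      rw [hexp]
      refine le_mul_exp_neg_of_le_sub_mul (by positivity) ih (by linarith) ?_
      have : c e' / B * (F - f ψ) ≤ Dwc f U e' ψ := by
        rw [div_mul_eq_mul_div, div_le_iff₀ hB]; linarith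
      linarith

theorem RelaxedBudgetGreedy.one_sub_inv_exp_mul_le (hgp : RelaxedBudgetGreedy f U c B πg)
    (hmono : WCMonotone f U) (hsub : WCSubmodular f U) (hempty : f emptyPR = 0)
    (hc : ∀ e, 0 < c e) (hB : 0 < B) (hπs : ValidPolicy πs)
    (hF : ∀ φ ∈ U, F ≤ f (finalPR πs φ)) (hF0 : 0 ≤ F)
    (hcost : ∀ φ ∈ U, costPR c (finalPR πs φ) ≤ B) {φ : ι → O} (hφ : φ ∈ U) :
    (1 - (Real.exp 1)⁻¹) * F ≤ f (finalPR πg φ) := by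
  have hinv : 0 ≤ (Real.exp 1)⁻¹ * F := by positivity
  have hreach : Reachable πg U (finalPR πg φ) := ⟨φ, hφ, _, rfl⟩
  by_cases hdom : dom (finalPR πg φ) = Set.univ
  -- nothing is left to observe, so the bound on `π*` holds with `ρ = 0`
  · obtain ⟨φ', hφ', hle⟩ := exists_finalPR_le_add_mul_costPR hmono hsub hπs
      (fun e => (hc e).le) (ψ := finalPR πg φ) ⟨φ, hφ, consistent_runPolicy _⟩ le_rfl
      fun e he => absurd (hdom ▸ Set.mem_univ e) he
    linarith [hF φ' hφ']
  · have hover : B < costPR c (finalPR πg φ) := lt_of_not_ge fun h => by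
      obtain ⟨e, -, hsome, -⟩ := hgp.2.2 _ hreach h hdom
      simp [finalPR, runPolicy_card_eq_none hgp.1 φ] at hsome
    have hexp : Real.exp (-costPR c (finalPR πg φ) / B) ≤ (Real.exp 1)⁻¹ := by
      rw [← Real.exp_neg, Real.exp_le_exp, neg_div, neg_le_neg_iff, le_div_iff₀ hB]
      linarith
    have : F - f (finalPR πg φ) ≤ F * Real.exp (-costPR c (finalPR πg φ) / B) :=
      hgp.sub_le_mul_exp_runPolicy hmono hsub hempty hc hB hπs hF hF0 hcost hφ _
    nlinarith [mul_le_mul_of_nonneg_left hexp hF0]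

end Greedy

section WorstCase

variable [DecidableEq ι] [Fintype ι] [Finite O] {U : Set (ι → O)}
  {π : (ι → Option O) → Option ι} {φ : ι → O}

lemma fwc_le (f : (ι → Option O) → ℝ) (hφ : φ ∈ U) : fwc f U π ≤ f (finalPR π φ) :=
  csInf_le ((Set.toFinite U).image _).bddBelow ⟨φ, hφ, rfl⟩

lemma costPR_le_cwc (c : ι → ℝ) (hφ : φ ∈ U) : costPR c (finalPR π φ) ≤ cwc c U π :=
  le_csSup ((Set.toFinite U).image _).bddAbove ⟨φ, hφ, rfl⟩

end WorstCase

/-- **Corollary 1.** Suppose `f` is worst-case monotone and worst-case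
submodular with `f ∅ = 0`, and let `B` be a positive integer budget. Then the
relaxed budgeted worst-case density-greedy policy `π^{g+}` satisfies
`f_wc(π^{g+}) ≥ (1 − 1/e) · f_wc(π*)` for every adaptive policy `π*` with
`c_wc(π*) ≤ B`. -/
theorem stmt_12 {ι O : Type*} [Fintype ι] [Nonempty ι] [DecidableEq ι] [Fintype O]
    (U : Set (ι → O)) (hU : U.Nonempty)
    (c : ι → ℕ) (hc : ∀ e, 0 < c e)
    (f : (ι → Option O) → ℝ) (hf0 : ∀ ψ, 0 ≤ f ψ)
    (hmono : WCMonotone f U) (hsub : WCSubmodular f U)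
    (hempty : f emptyPR = 0)
    (B : ℕ) (hB : 0 < B)
    (πgp : (ι → Option O) → Option ι)
    (hgp : RelaxedBudgetGreedy f U (fun e => (c e : ℝ)) (B : ℝ) πgp)
    (πs : (ι → Option O) → Option ι) (hπs : ValidPolicy πs)
    (hπsB : cwc (fun e => (c e : ℝ)) U πs ≤ (B : ℝ)) :
    (1 - (Real.exp 1)⁻¹) * fwc f U πs ≤ fwc f U πgp := by
  obtain ⟨φ₀, hφ₀⟩ := hU
  have : Nonempty O := ⟨φ₀ (Classical.arbitrary ι)⟩
  have hF0 : 0 ≤ fwc f U πs := Real.sInf_nonneg (by rintro _ ⟨φ, -, rfl⟩; exact hf0 _)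
  refine le_csInf ⟨_, φ₀, hφ₀, rfl⟩ ?_
  rintro _ ⟨φ, hφ, rfl⟩
  exact hgp.one_sub_inv_exp_mul_le hmono hsub hempty (fun e => Nat.cast_pos.mpr (hc e))
    (Nat.cast_pos.mpr hB) hπs (fun φ hφ => fwc_le f hφ) hF0
    (fun φ hφ => (costPR_le_cwc _ hφ).trans hπsB) hφ

end WCAS
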